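/- Nonnegativity of the conservation-law gap: under the hypotheses of Theorem 1 (x_i deterministic in (x_0, e^{i-1}); I(x_0; e_i | e^{i-1}, x^i) = 0; I(x_0; e_i | e^{i-1}, y^i) = 0 for all i), the feedback flow dominates the message flow: I(y^n → e^n) ≥ I(x^n → e^n), with equality if and only if I(y^n → e^n | x_0) = 0. -/

import Mathlib

open scoped BigOperators

/-- Distribution of a finite-valued random variable `X` under pmf `p`. -/
noncomputable def rvDist {Ω A : Type*} [Fintype Ω] [Fintype A] [DecidableEq A]
    (p : Ω → ℝ) (X : Ω → A) (a : A) : ℝ := ∑ ω, if X ω = a then p ω else 0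

/-- Shannon entropy `H(X)`. -/
noncomputable def ent {Ω A : Type*} [Fintype Ω] [Fintype A] [DecidableEq A]
    (p : Ω → ℝ) (X : Ω → A) : ℝ := ∑ a, Real.negMulLog (rvDist p X a)

/-- Conditional entropy `H(X | Y) = H(X,Y) - H(Y)`. -/
noncomputable def condEnt {Ω A B : Type*} [Fintype Ω] [Fintype A] [DecidableEq A]
    [Fintype B] [DecidableEq B] (p : Ω → ℝ) (X : Ω → A) (Y : Ω → B) : ℝ :=
  ent p (fun ω => (X ω, Y ω)) - ent p Y

/-- Mutual information `I(X;Y) = H(X)+H(Y)-H(X,Y)`. -/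
noncomputable def MI {Ω A B : Type*} [Fintype Ω] [Fintype A] [DecidableEq A]
    [Fintype B] [DecidableEq B] (p : Ω → ℝ) (X : Ω → A) (Y : Ω → B) : ℝ :=
  ent p X + ent p Y - ent p (fun ω => (X ω, Y ω))

/-- Conditional mutual information `I(X;Y|Z) = H(X|Z)+H(Y|Z)-H(X,Y|Z)`. -/
noncomputable def CMI {Ω A B C : Type*} [Fintype Ω] [Fintype A] [DecidableEq A]
    [Fintype B] [DecidableEq B] [Fintype C] [DecidableEq C]
    (p : Ω → ℝ) (X : Ω → A) (Y : Ω → B) (Z : Ω → C) : ℝ :=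
  condEnt p X Z + condEnt p Y Z - condEnt p (fun ω => (X ω, Y ω)) Z

/-- The prefix `x^i = (x_1, …, x_i)` of a random sequence, as a random variable. -/
def pre {Ω A : Type*} {n : ℕ} (x : Fin n → Ω → A) (i : ℕ) (h : i ≤ n) :
    Ω → (Fin i → A) := fun ω j => x (Fin.castLE h j) ω

/-- Directed information `I(x^n → y^n) = ∑_{i=1}^n I(x^i; y_i | y^{i-1})`. -/
noncomputable def DI {Ω A B : Type*} [Fintype Ω] [Fintype A] [DecidableEq A]
    [Fintype B] [DecidableEq B] {n : ℕ}
    (p : Ω → ℝ) (x : Fin n → Ω → A) (y : Fin n → Ω → B) : ℝ :=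
  ∑ i : Fin n, CMI p (pre x (i.1+1) i.isLt) (y i) (pre y i.1 i.isLt.le)

/-! Expand `I((x₀, u^i); e_i | e^{i-1})` by the chain rule in both orders, for `u = x` and
`u = y`. The causality hypothesis turns this into
`I(y^i; e_i | e^{i-1}) = I(x₀; e_i | e^{i-1}) + I(y^i; e_i | e^{i-1}, x₀)`. The Markov hypothesis
does the same for `x`, where moreover `x^i` is a function of `(e^{i-1}, x₀)`, so the last term
vanishes: `I(x^i; e_i | e^{i-1}) = I(x₀; e_i | e^{i-1})`. Summing over `i`, the gap between the
two directed informations is `I(y^n → e^n | x₀)`, a sum of conditional mutual informations, which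
are nonnegative by `log t ≤ t - 1`. -/

open Real

lemma mul_log_add_log_sub_le {q u v w : ℝ} (hq : 0 ≤ q) (hqu : q ≤ u) (hqv : q ≤ v)
    (huw : u ≤ w) : q * (log u + log v - log w - log q) ≤ u * v / w - q := by
  rcases hq.eq_or_lt with rfl | hq
  · simp only [zero_mul, sub_zero]
    exact div_nonneg (mul_nonneg hqu hqv) (hqu.trans huw)
  have hu := hq.trans_le hqu
  have hv := hq.trans_le hqv
  have hw := hu.trans_le huw
  have hlog := log_le_sub_one_of_pos (div_pos (mul_pos hu hv) (mul_pos hw hq))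
  rw [log_div (mul_pos hu hv).ne' (mul_pos hw hq).ne', log_mul hu.ne' hv.ne',
    log_mul hw.ne' hq.ne'] at hlog
  calc q * (log u + log v - log w - log q) = q * (log u + log v - (log w + log q)) := by ring
    _ ≤ q * (u * v / (w * q) - 1) := mul_le_mul_of_nonneg_left hlog hq.le
    _ = u * v / w - q := by field_simp

lemma negMulLog_sum_add_sum_negMulLog_le {A B : Type*} [Fintype A] [Fintype B]
    (q : A → B → ℝ) (hq : ∀ a b, 0 ≤ q a b) :
    negMulLog (∑ a, ∑ b, q a b) + ∑ a, ∑ b, negMulLog (q a b)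
      ≤ ∑ a, negMulLog (∑ b, q a b) + ∑ b, negMulLog (∑ a, q a b) := by
  set u := fun a => ∑ b, q a b
  set v := fun b => ∑ a, q a b
  set w := ∑ a, ∑ b, q a b
  have hqu : ∀ a b, q a b ≤ u a := fun a b =>
    Finset.single_le_sum (fun b _ => hq a b) (Finset.mem_univ b)
  have hqv : ∀ a b, q a b ≤ v b := fun a b =>
    Finset.single_le_sum (fun a _ => hq a b) (Finset.mem_univ a)
  have huw : ∀ a, u a ≤ w := fun a =>
    Finset.single_le_sum (f := u) (fun a _ => Finset.sum_nonneg fun b _ => hq a b)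
      (Finset.mem_univ a)
  have hvw : ∑ b, v b = w := Finset.sum_comm
  have hsum := Finset.sum_le_sum fun a (_ : a ∈ Finset.univ) => Finset.sum_le_sum
    fun b (_ : b ∈ Finset.univ) => mul_log_add_log_sub_le (hq a b) (hqu a b) (hqv a b) (huw a)
  have hrhs : ∑ a, ∑ b, (u a * v b / w - q a b) = 0 := by
    simp only [Finset.sum_sub_distrib, ← Finset.sum_div, ← Finset.mul_sum, ← Finset.sum_mul, hvw]
    rw [mul_self_div_self, sub_self]
  have hlhs : ∑ a, ∑ b, q a b * (log (u a) + log (v b) - log w - log (q a b))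
      = negMulLog w + ∑ a, ∑ b, negMulLog (q a b)
        - (∑ a, negMulLog (u a) + ∑ b, negMulLog (v b)) := by
    simp only [negMulLog, neg_mul, Finset.sum_neg_distrib, mul_sub, mul_add,
      Finset.sum_add_distrib, Finset.sum_sub_distrib, ← Finset.sum_mul]
    rw [Finset.sum_comm (f := fun a b => q a b * log (v b))]
    simp only [← Finset.sum_mul]
    ring
  linarith

lemma pre_succ {Ω A : Type*} {n : ℕ} (x : Fin n → Ω → A) (L : ℕ) (hL : L < n) :
    pre x (L + 1) hL = fun ω => Fin.snoc (pre x L hL.le ω) (x ⟨L, hL⟩ ω) := by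
  funext ω j
  refine Fin.lastCases ?_ (fun j => ?_) j
  · simp only [Fin.snoc_last]
    rfl
  · simp only [Fin.snoc_castSucc]
    rfl

section

variable {Ω A B C D : Type*} [Fintype Ω] [Fintype A] [DecidableEq A] [Fintype B] [DecidableEq B]
  [Fintype C] [DecidableEq C] [Fintype D] [DecidableEq D] (p : Ω → ℝ)

lemma rvDist_nonneg (hp : ∀ ω, 0 ≤ p ω) (X : Ω → A) (a : A) : 0 ≤ rvDist p X a :=
  Finset.sum_nonneg fun ω _ => by split_ifs <;> simp [hp ω]

lemma rvDist_comp (f : A → B) (X : Ω → A) (b : B) :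
    rvDist p (fun ω => f (X ω)) b = ∑ a, if f a = b then rvDist p X a else 0 := by
  simp only [rvDist, Finset.ite_sum_zero]
  rw [Finset.sum_comm]
  refine Finset.sum_congr rfl fun ω _ => ?_
  rw [Fintype.sum_eq_single (X ω) fun a ha => by simp [Ne.symm ha]]
  simp

lemma ent_comp_of_injective (f : A → B) (hf : f.Injective) (X : Ω → A) :
    ent p (fun ω => f (X ω)) = ent p X := by
  refine (Fintype.sum_of_injective f hf _ _ (fun b hb => ?_) fun a => ?_).symm
  · rw [rvDist_comp, Finset.sum_eq_zero fun a _ => if_neg fun h => hb ⟨a, h⟩, negMulLog_zero]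
  · simp [rvDist_comp, hf.eq_iff]

lemma ent_prod_comm (X : Ω → A) (Y : Ω → B) :
    ent p (fun ω => (Y ω, X ω)) = ent p (fun ω => (X ω, Y ω)) :=
  ent_comp_of_injective p Prod.swap Prod.swap_injective (fun ω => (X ω, Y ω))

lemma ent_prod_assoc (X : Ω → A) (Y : Ω → B) (Z : Ω → C) :
    ent p (fun ω => (X ω, Y ω, Z ω)) = ent p (fun ω => ((X ω, Y ω), Z ω)) :=
  ent_comp_of_injective p (Equiv.prodAssoc A B C) (Equiv.injective _)
    (fun ω => ((X ω, Y ω), Z ω))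

lemma condEnt_comp_of_injective (f : A → B) (hf : f.Injective) (X : Ω → A) (Z : Ω → C) :
    condEnt p (fun ω => f (X ω)) Z = condEnt p X Z := by
  rw [condEnt, condEnt, ← ent_comp_of_injective p (Prod.map f id)
    (hf.prodMap Function.injective_id) (fun ω => (X ω, Z ω))]
  rfl

lemma condEnt_comp_right_of_injective (X : Ω → A) (f : C → D) (hf : f.Injective) (Z : Ω → C) :
    condEnt p X (fun ω => f (Z ω)) = condEnt p X Z := by
  have hXZ : ent p (fun ω => (X ω, f (Z ω))) = ent p (fun ω => (X ω, Z ω)) :=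
    ent_comp_of_injective p (Prod.map id f) (Function.injective_id.prodMap hf)
      (fun ω => (X ω, Z ω))
  rw [condEnt, condEnt, hXZ, ent_comp_of_injective p f hf]

lemma CMI_comp_of_injective (f : A → D) (hf : f.Injective) (X : Ω → A) (Y : Ω → B)
    (Z : Ω → C) : CMI p (fun ω => f (X ω)) Y Z = CMI p X Y Z := by
  simp only [CMI]
  rw [condEnt_comp_of_injective p f hf]
  congr 1
  exact condEnt_comp_of_injective p (Prod.map f id) (hf.prodMap Function.injective_id)
    (fun ω => (X ω, Y ω)) Z

lemma condEnt_eq_zero_of_unique [Unique A] (X : Ω → A) (Z : Ω → C) : condEnt p X Z = 0 := by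
  have hX : (fun ω => (X ω, Z ω)) = fun ω => (default, Z ω) :=
    funext fun ω => by rw [Unique.eq_default (X ω)]
  rw [condEnt, hX, ent_comp_of_injective p (fun z : C => ((default : A), z))
    (fun _ _ h => congrArg Prod.snd h), sub_self]

lemma condEnt_prod (X : Ω → A) (Y : Ω → B) (Z : Ω → C) :
    condEnt p (fun ω => (X ω, Y ω)) Z = condEnt p X Z + condEnt p Y (fun ω => (Z ω, X ω)) := by
  have hXYZ : ent p (fun ω => (Y ω, Z ω, X ω)) = ent p (fun ω => ((X ω, Y ω), Z ω)) :=
    ent_comp_of_injective p (fun t : (A × B) × C => (t.1.2, t.2, t.1.1))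
      (fun _ _ h => by simp_all [Prod.ext_iff]) (fun ω => ((X ω, Y ω), Z ω))
  simp only [condEnt]
  rw [hXYZ, ent_prod_comm p X Z]
  ring

lemma CMI_eq_condEnt_sub (X : Ω → A) (Y : Ω → B) (Z : Ω → C) :
    CMI p X Y Z = condEnt p X Z - condEnt p X (fun ω => (Y ω, Z ω)) := by
  simp only [CMI, condEnt]
  rw [ent_prod_assoc]
  ring

lemma CMI_self (X : Ω → A) (Z : Ω → C) : CMI p X X Z = condEnt p X Z := by
  have hXXZ : ent p (fun ω => ((X ω, X ω), Z ω)) = ent p (fun ω => (X ω, Z ω)) :=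
    ent_comp_of_injective p (fun t : A × C => ((t.1, t.1), t.2))
      (fun _ _ h => by simp_all [Prod.ext_iff]) (fun ω => (X ω, Z ω))
  simp only [CMI, condEnt]
  rw [hXXZ]
  ring

lemma CMI_prod (X : Ω → A) (Y : Ω → B) (E : Ω → D) (Z : Ω → C) :
    CMI p (fun ω => (X ω, Y ω)) E Z = CMI p X E Z + CMI p Y E (fun ω => (Z ω, X ω)) := by
  have hassoc : condEnt p (fun ω => ((X ω, Y ω), E ω)) Z
      = condEnt p (fun ω => (X ω, Y ω, E ω)) Z :=
    (condEnt_comp_of_injective p (Equiv.prodAssoc A B D) (Equiv.injective _)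
      (fun ω => ((X ω, Y ω), E ω)) Z).symm
  simp only [CMI]
  rw [hassoc, condEnt_prod p X Y Z, condEnt_prod p X E Z,
    condEnt_prod p X (fun ω => (Y ω, E ω)) Z]
  ring

lemma CMI_nonneg (hp : ∀ ω, 0 ≤ p ω) (X : Ω → A) (Y : Ω → B) (Z : Ω → C) :
    0 ≤ CMI p X Y Z := by
  set T := fun ω => ((X ω, Y ω), Z ω)
  set q := fun a b c => rvDist p T ((a, b), c)
  have hXZ : ent p (fun ω => (X ω, Z ω)) = ∑ c, ∑ a, negMulLog (∑ b, q a b c) := by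
    refine (Fintype.sum_prod_type_right _).trans (Finset.sum_congr rfl fun c _ =>
      Finset.sum_congr rfl fun a _ => congrArg _ ?_)
    refine (rvDist_comp p (fun t : (A × B) × C => (t.1.1, t.2)) T _).trans ?_
    simp only [q, Prod.mk.injEq, ite_and, Fintype.sum_prod_type, Finset.sum_ite_irrel,
      Finset.sum_ite_eq', Finset.mem_univ, if_true, Finset.sum_const_zero]
    rw [Finset.sum_comm]
    simp
  have hYZ : ent p (fun ω => (Y ω, Z ω)) = ∑ c, ∑ b, negMulLog (∑ a, q a b c) := by
    refine (Fintype.sum_prod_type_right _).trans (Finset.sum_congr rfl fun c _ =>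
      Finset.sum_congr rfl fun b _ => congrArg _ ?_)
    refine (rvDist_comp p (fun t : (A × B) × C => (t.1.2, t.2)) T _).trans ?_
    simp [q, Fintype.sum_prod_type, ite_and, Finset.sum_ite_eq']
  have hZ : ent p Z = ∑ c, negMulLog (∑ a, ∑ b, q a b c) := by
    refine Finset.sum_congr rfl fun c _ => congrArg _ ?_
    refine (rvDist_comp p (fun t : (A × B) × C => t.2) T _).trans ?_
    simp [q, Fintype.sum_prod_type]
  have hXYZ : ent p T = ∑ c, ∑ a, ∑ b, negMulLog (q a b c) := by
    rw [ent, Fintype.sum_prod_type_right]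
    simp only [Fintype.sum_prod_type, q]
  have hsub := Finset.sum_le_sum fun c (_ : c ∈ Finset.univ) =>
    negMulLog_sum_add_sum_negMulLog_le (fun a b => q a b c)
      fun a b => rvDist_nonneg p hp T ((a, b), c)
  simp only [Finset.sum_add_distrib] at hsub
  simp only [CMI, condEnt]
  rw [hXZ, hYZ, hZ, hXYZ]
  linarith

lemma condEnt_nonneg (hp : ∀ ω, 0 ≤ p ω) (X : Ω → A) (Z : Ω → C) : 0 ≤ condEnt p X Z :=
  CMI_self p X Z ▸ CMI_nonneg p hp X X Z

lemma condEnt_le_condEnt_comp (hp : ∀ ω, 0 ≤ p ω) (X : Ω → A) (Z : Ω → C) (f : C → D) :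
    condEnt p X Z ≤ condEnt p X (fun ω => f (Z ω)) := by
  have hgraph := condEnt_comp_right_of_injective p X (fun z => (z, f z))
    (fun _ _ h => congrArg Prod.fst h) Z
  have := CMI_nonneg p hp X Z (fun ω => f (Z ω))
  rw [CMI_eq_condEnt_sub, hgraph] at this
  linarith

lemma condEnt_eq_zero_of_comp (hp : ∀ ω, 0 ≤ p ω) (X : Ω → A) (Z : Ω → C) (f : C → D)
    (h : condEnt p X (fun ω => f (Z ω)) = 0) : condEnt p X Z = 0 :=
  le_antisymm ((condEnt_le_condEnt_comp p hp X Z f).trans_eq h) (condEnt_nonneg p hp X Z)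

lemma CMI_eq_zero_of_condEnt_eq_zero (hp : ∀ ω, 0 ≤ p ω) (X : Ω → A) (Y : Ω → B) (Z : Ω → C)
    (h : condEnt p X Z = 0) : CMI p X Y Z = 0 := by
  have := CMI_eq_condEnt_sub p X Y Z
  linarith [CMI_nonneg p hp X Y Z, condEnt_nonneg p hp X (fun ω => (Y ω, Z ω))]

lemma CMI_eq_add_of_CMI_eq_zero (M : Ω → D) (Y : Ω → B) (E : Ω → A) (Z : Ω → C)
    (h : CMI p M E (fun ω => (Z ω, Y ω)) = 0) :
    CMI p Y E Z = CMI p M E Z + CMI p Y E (fun ω => (Z ω, M ω)) := by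
  have hswap := CMI_comp_of_injective p Prod.swap Prod.swap_injective
    (fun ω => (Y ω, M ω)) E Z
  have := CMI_prod p M Y E Z
  have := CMI_prod p Y M E Z
  simp only [Prod.swap_prod_mk] at hswap
  linarith

lemma condEnt_pre_eq_zero {n : ℕ} (hp : ∀ ω, 0 ≤ p ω) (x : Fin n → Ω → A) (W : Ω → D) :
    ∀ L (hL : L ≤ n), (∀ j : Fin n, j.1 < L → condEnt p (x j) W = 0) →
      condEnt p (pre x L hL) W = 0
  | 0, _, _ => condEnt_eq_zero_of_unique p _ W
  | L + 1, (hL : L < n), h => by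
    have hinit := condEnt_pre_eq_zero hp x W L hL.le fun j hj => h j (by omega)
    have hlast : condEnt p (x ⟨L, hL⟩) W = 0 := h _ (by simp)
    have hsnoc := condEnt_comp_of_injective p (Fin.snocEquiv fun _ => A) (Equiv.injective _)
      (fun ω => (x ⟨L, hL⟩ ω, pre x L hL.le ω)) W
    have hcond := condEnt_le_condEnt_comp p hp (pre x L hL.le) (fun ω => (W ω, x ⟨L, hL⟩ ω))
      Prod.fst
    rw [condEnt_prod] at hsnoc
    rw [pre_succ]
    refine le_antisymm (hsnoc.trans_le ?_) (condEnt_nonneg p hp _ W)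
    linarith

end

theorem conservation_gap_nonneg_general {Ω M A B C : Type*} [Fintype Ω]
    [Fintype M] [DecidableEq M] [Fintype A] [DecidableEq A]
    [Fintype B] [DecidableEq B] [Fintype C] [DecidableEq C] {n : ℕ} (p : Ω → ℝ)
    (hp : ∀ ω, 0 ≤ p ω)
    (x0 : Ω → M) (x : Fin n → Ω → A) (y : Fin n → Ω → B) (e : Fin n → Ω → C)
    (hdet : ∀ i : Fin n, condEnt p (x i) (fun ω => (x0 ω, pre e i.1 i.isLt.le ω)) = 0)
    (hmarkov : ∀ i : Fin n,
      CMI p x0 (e i) (fun ω => (pre e i.1 i.isLt.le ω, pre x (i.1+1) i.isLt ω)) = 0)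
    (hcausal : ∀ i : Fin n,
      CMI p x0 (e i) (fun ω => (pre e i.1 i.isLt.le ω, pre y (i.1+1) i.isLt ω)) = 0) :
    DI p y e ≥ DI p x e ∧
    (DI p y e = DI p x e ↔
      (∑ i : Fin n, CMI p (pre y (i.1+1) i.isLt) (e i)
        (fun ω => (pre e i.1 i.isLt.le ω, x0 ω))) = 0) := by
  have hstep : ∀ i : Fin n, CMI p (pre y (i.1+1) i.isLt) (e i) (pre e i.1 i.isLt.le)
      = CMI p (pre x (i.1+1) i.isLt) (e i) (pre e i.1 i.isLt.le)
        + CMI p (pre y (i.1+1) i.isLt) (e i) (fun ω => (pre e i.1 i.isLt.le ω, x0 ω)) := by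
    intro i
    have hx_det :
        condEnt p (pre x (i.1+1) i.isLt) (fun ω => (pre e i.1 i.isLt.le ω, x0 ω)) = 0 :=
      condEnt_pre_eq_zero p hp x _ _ _ fun j hj => condEnt_eq_zero_of_comp p hp (x j) _
        (fun t => (t.2, fun s : Fin j.1 => t.1 (Fin.castLE (by omega) s))) (hdet j)
    rw [CMI_eq_add_of_CMI_eq_zero p x0 _ _ _ (hcausal i),
      CMI_eq_add_of_CMI_eq_zero p x0 _ _ _ (hmarkov i),
      CMI_eq_zero_of_condEnt_eq_zero p hp _ _ _ hx_det, add_zero]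
  have hgap : DI p y e = DI p x e + ∑ i : Fin n,
      CMI p (pre y (i.1+1) i.isLt) (e i) (fun ω => (pre e i.1 i.isLt.le ω, x0 ω)) := by
    simp only [DI, hstep, Finset.sum_add_distrib]
  have hgap_nonneg : 0 ≤ ∑ i : Fin n,
      CMI p (pre y (i.1+1) i.isLt) (e i) (fun ω => (pre e i.1 i.isLt.le ω, x0 ω)) :=
    Finset.sum_nonneg fun i _ => CMI_nonneg p hp _ _ _
  exact ⟨by linarith, by constructor <;> intro <;> linarith⟩

/-- nonnegativity of the conservation-law gap:
`I(y^n → e^n) ≥ I(x^n → e^n)`, with equality iff `I(y^n → e^n | x_0) = 0`. -/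
theorem conservation_gap_nonneg {Ω M A B C : Type*} [Fintype Ω]
    [Fintype M] [DecidableEq M] [Fintype A] [DecidableEq A]
    [Fintype B] [DecidableEq B] [Fintype C] [DecidableEq C] {n : ℕ} (p : Ω → ℝ)
    (hp : ∀ ω, 0 ≤ p ω) (hp1 : ∑ ω, p ω = 1)
    (x0 : Ω → M) (x : Fin n → Ω → A) (y : Fin n → Ω → B) (e : Fin n → Ω → C)
    (hdet : ∀ i : Fin n, condEnt p (x i) (fun ω => (x0 ω, pre e i.1 i.isLt.le ω)) = 0)
    (hmarkov : ∀ i : Fin n,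
      CMI p x0 (e i) (fun ω => (pre e i.1 i.isLt.le ω, pre x (i.1+1) i.isLt ω)) = 0)
    (hcausal : ∀ i : Fin n,
      CMI p x0 (e i) (fun ω => (pre e i.1 i.isLt.le ω, pre y (i.1+1) i.isLt ω)) = 0) :
    DI p y e ≥ DI p x e ∧
    (DI p y e = DI p x e ↔
      (∑ i : Fin n, CMI p (pre y (i.1+1) i.isLt) (e i)
        (fun ω => (pre e i.1 i.isLt.le ω, x0 ω))) = 0) :=
  conservation_gap_nonneg_general p hp x0 x y e hdet hmarkov hcausal
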